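/- Let M be an m × n real matrix with (reduced) SVD M = UΣVᵀ where Σ has strictly positive diagonal entries. Then for any matrix W with UᵀW = 0, WV = 0, and operator norm ‖W‖₂ ≤ 1, the matrix UVᵀ + W is a subgradient of the nuclear norm at M, i.e., for all matrices N, ‖N‖_* ≥ ‖M‖_* + ⟨UVᵀ + W, N - M⟩, where ⟨A,B⟩ = trace(AᵀB). -/

import Mathlib

/-!
The nuclear norm is dual to the operator norm. If the columns `qᵢ` of an orthogonal `Q` are
eigenvectors of `Nᵀ N`, then `⟨G, N⟩ = ∑ᵢ ⟪G qᵢ, N qᵢ⟫ ≤ ∑ᵢ ‖N qᵢ‖ = ‖N‖_*` whenever `‖G‖₂ ≤ 1`,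
with equality for the partial isometry `Z = N Q diag(1 / ‖N qᵢ‖) Qᵀ`. For `G = U Vᵀ + W`, the
conditions `Uᵀ W = 0` and `W V = 0` make `U Vᵀ` and `W` act on orthogonal pieces of `x` with
orthogonal ranges, so `‖G‖₂ ≤ 1`, and `⟨G, M⟩ = ∑ σ`. Conversely `‖M‖_* = ⟨Z, U Σ Vᵀ⟩ ≤ ∑ σ`, as `Z`
is a contraction and the columns of `U` and `V` are unit vectors. Hence
`⟨G, N - M⟩ ≤ ‖N‖_* - ∑ σ ≤ ‖N‖_* - ‖M‖_*`.
-/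

open Matrix BigOperators

noncomputable def singVal {m n : ℕ} (M : Matrix (Fin m) (Fin n) ℝ) (i : Fin n) : ℝ :=
  Real.sqrt ((Matrix.isHermitian_conjTranspose_mul_self M).eigenvalues i)

noncomputable def nuclearNorm {m n : ℕ} (M : Matrix (Fin m) (Fin n) ℝ) : ℝ :=
  ∑ i, singVal M i

noncomputable def frobNorm {m n : ℕ} (M : Matrix (Fin m) (Fin n) ℝ) : ℝ :=
  Real.sqrt (Matrix.trace (Mᵀ * M))

noncomputable def finner {m n : ℕ} (A B : Matrix (Fin m) (Fin n) ℝ) : ℝ :=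
  Matrix.trace (Aᵀ * B)

noncomputable def opNorm {m n : ℕ} (M : Matrix (Fin m) (Fin n) ℝ) : ℝ :=
  ‖LinearMap.toContinuousLinearMap (Matrix.toEuclideanLin M)‖

section RealMatrix

variable {ι κ ν : Type*} [Fintype ι] [Fintype κ] [Fintype ν]

theorem dotProduct_le_sqrt_mul_sqrt (x y : ι → ℝ) : x ⬝ᵥ y ≤ √(x ⬝ᵥ x) * √(y ⬝ᵥ y) := by
  simpa [dotProduct, sq] using Real.sum_mul_le_sqrt_mul_sqrt Finset.univ x y

theorem mulVec_dotProduct_mulVec (A : Matrix κ ι ℝ) (B : Matrix κ ν ℝ) (x : ι → ℝ)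
    (y : ν → ℝ) : (A *ᵥ x) ⬝ᵥ (B *ᵥ y) = x ⬝ᵥ (Aᵀ * B) *ᵥ y := by
  rw [← mulVec_mulVec, dotProduct_mulVec x, vecMul_transpose]

variable [DecidableEq ι]

theorem trace_transpose_mul_eq_sum (A B : Matrix κ ι ℝ) {Q : Matrix ι ι ℝ} (hQ : Q * Qᵀ = 1) :
    trace (Aᵀ * B) = ∑ i, (A *ᵥ Qᵀ i) ⬝ᵥ (B *ᵥ Qᵀ i) := by
  calc trace (Aᵀ * B) = trace (Aᵀ * B * Q * Qᵀ) := by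
        rw [Matrix.mul_assoc _ Q, hQ, Matrix.mul_one]
    _ = trace ((A * Q)ᵀ * (B * Q)) := by
        rw [trace_mul_cycle, transpose_mul, Matrix.mul_assoc, Matrix.mul_assoc, Matrix.mul_assoc]
    _ = _ := rfl

theorem dotProduct_conj_diagonal_mulVec_le {Q : Matrix ι ι ℝ} (hQ : Q * Qᵀ = 1) {d : ι → ℝ}
    (hd : ∀ i, d i ≤ 1) (x : ι → ℝ) : x ⬝ᵥ (Q * diagonal d * Qᵀ) *ᵥ x ≤ x ⬝ᵥ x := by
  set y := Qᵀ *ᵥ x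
  calc x ⬝ᵥ (Q * diagonal d * Qᵀ) *ᵥ x = y ⬝ᵥ diagonal d *ᵥ y := by
        rw [mulVec_dotProduct_mulVec, transpose_transpose, mulVec_mulVec]
    _ ≤ y ⬝ᵥ y := by
        simp only [mulVec_diagonal, dotProduct]
        exact Finset.sum_le_sum fun i _ => by nlinarith [hd i, mul_self_nonneg (y i)]
    _ = x ⬝ᵥ x := by
        rw [mulVec_dotProduct_mulVec, transpose_transpose, hQ, one_mulVec]

theorem Matrix.IsHermitian.exists_orthogonal_conj_eq_diagonal {A : Matrix ι ι ℝ}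
    (hA : A.IsHermitian) : ∃ Q : Matrix ι ι ℝ, Q * Qᵀ = 1 ∧ Qᵀ * A * Q = diagonal hA.eigenvalues := by
  refine ⟨hA.eigenvectorUnitary, ?_, ?_⟩
  · simpa [star_eq_conjTranspose] using Unitary.coe_mul_star_self hA.eigenvectorUnitary
  · simpa [star_eq_conjTranspose] using hA.conjStarAlgAut_star_eigenvectorUnitary

theorem exists_orthogonal_mul_transpose_mul_mul_eq_diagonal (N : Matrix κ ι ℝ) :
    ∃ Q : Matrix ι ι ℝ, Q * Qᵀ = 1 ∧
      (N * Q)ᵀ * (N * Q) = diagonal (isHermitian_conjTranspose_mul_self N).eigenvalues := by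
  obtain ⟨Q, hQ, hdiag⟩ :=
    (isHermitian_conjTranspose_mul_self N).exists_orthogonal_conj_eq_diagonal
  refine ⟨Q, hQ, ?_⟩
  rw [← hdiag, conjTranspose_eq_transpose_of_trivial, transpose_mul]
  simp only [Matrix.mul_assoc]

end RealMatrix

theorem dotProduct_self_transpose_apply_eq_one {ι κ : Type*} [Fintype κ] [DecidableEq ι]
    {A : Matrix κ ι ℝ} (hA : Aᵀ * A = 1) (i : ι) : Aᵀ i ⬝ᵥ Aᵀ i = 1 := by
  have h := congr_fun (congr_fun hA i) i
  rwa [mul_apply', one_apply_eq] at h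

section FinMatrix

variable {m n r : ℕ}

theorem opNorm_le_one_iff (A : Matrix (Fin m) (Fin n) ℝ) :
    opNorm A ≤ 1 ↔ ∀ x, (A *ᵥ x) ⬝ᵥ (A *ᵥ x) ≤ x ⬝ᵥ x := by
  have hnorm : ∀ {k : ℕ} (v : Fin k → ℝ), ‖WithLp.toLp 2 v‖ = √(v ⬝ᵥ v) := by
    intro k v
    rw [norm_eq_sqrt_real_inner, EuclideanSpace.inner_eq_star_dotProduct, star_trivial]
  rw [opNorm, ContinuousLinearMap.opNorm_le_iff zero_le_one,
    (WithLp.equiv 2 (Fin n → ℝ)).symm.forall_congr_left]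
  refine forall_congr' fun x => ?_
  simp only [LinearMap.coe_toContinuousLinearMap', toLpLin_apply, hnorm, one_mul]
  exact Real.sqrt_le_sqrt_iff (Finset.sum_nonneg fun i _ => mul_self_nonneg _)

theorem finner_sub_right (A B C : Matrix (Fin m) (Fin n) ℝ) :
    finner A (B - C) = finner A B - finner A C := by
  simp only [finner, Matrix.mul_sub, trace_sub]

theorem finner_le_nuclearNorm {G : Matrix (Fin m) (Fin n) ℝ} (hG : opNorm G ≤ 1)
    (N : Matrix (Fin m) (Fin n) ℝ) : finner G N ≤ nuclearNorm N := by
  obtain ⟨Q, hQ, hNQ⟩ := exists_orthogonal_mul_transpose_mul_mul_eq_diagonal N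
  rw [finner, trace_transpose_mul_eq_sum G N hQ, nuclearNorm]
  refine Finset.sum_le_sum fun i _ => ?_
  have hNq : (N *ᵥ Qᵀ i) ⬝ᵥ (N *ᵥ Qᵀ i) = (isHermitian_conjTranspose_mul_self N).eigenvalues i := by
    have h := congr_fun (congr_fun hNQ i) i
    rwa [mul_apply', diagonal_apply_eq] at h
  calc (G *ᵥ Qᵀ i) ⬝ᵥ (N *ᵥ Qᵀ i)
      ≤ √((G *ᵥ Qᵀ i) ⬝ᵥ (G *ᵥ Qᵀ i)) * √((N *ᵥ Qᵀ i) ⬝ᵥ (N *ᵥ Qᵀ i)) :=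
        dotProduct_le_sqrt_mul_sqrt _ _
    _ ≤ √(Qᵀ i ⬝ᵥ Qᵀ i) * √((N *ᵥ Qᵀ i) ⬝ᵥ (N *ᵥ Qᵀ i)) := by
        gcongr; exact (opNorm_le_one_iff G).mp hG _
    _ = singVal N i := by
        rw [dotProduct_self_transpose_apply_eq_one (mul_eq_one_comm.mp hQ), hNq, Real.sqrt_one,
          one_mul, singVal]

theorem exists_opNorm_le_one_finner_eq_nuclearNorm (N : Matrix (Fin m) (Fin n) ℝ) :
    ∃ Z, opNorm Z ≤ 1 ∧ finner Z N = nuclearNorm N := by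
  obtain ⟨Q, hQ, hNQ⟩ := exists_orthogonal_mul_transpose_mul_mul_eq_diagonal N
  set ev := (isHermitian_conjTranspose_mul_self N).eigenvalues
  -- `c i = 1 / singVal N i`, with the junk value `0⁻¹ = 0` where `singVal N i = 0`
  set c : Fin n → ℝ := fun i => (√(ev i))⁻¹
  have hc : ∀ i, c i * ev i = √(ev i) := fun i => by rw [inv_mul_eq_div, Real.div_sqrt]
  refine ⟨N * Q * diagonal c * Qᵀ, ?_, ?_⟩
  · rw [opNorm_le_one_iff]
    intro x
    have hZZ : (N * Q * diagonal c * Qᵀ)ᵀ * (N * Q * diagonal c * Qᵀ)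
        = Q * diagonal c * ((N * Q)ᵀ * (N * Q)) * diagonal c * Qᵀ := by
      simp only [transpose_mul, transpose_transpose, diagonal_transpose, Matrix.mul_assoc]
    rw [mulVec_dotProduct_mulVec, hZZ, hNQ, Matrix.mul_assoc Q, diagonal_mul_diagonal,
      Matrix.mul_assoc Q, diagonal_mul_diagonal]
    refine dotProduct_conj_diagonal_mulVec_le hQ (fun i => ?_) x
    rw [hc]
    exact mul_inv_le_one
  · calc finner (N * Q * diagonal c * Qᵀ) N = trace (diagonal c * ((N * Q)ᵀ * (N * Q))) := by
          simp only [finner, transpose_mul, transpose_transpose, diagonal_transpose,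
            Matrix.mul_assoc]
          rw [trace_mul_comm Q]
          simp only [Matrix.mul_assoc]
      _ = nuclearNorm N := by
          rw [hNQ, diagonal_mul_diagonal, trace_diagonal, nuclearNorm]
          simp only [hc, singVal, ev]

theorem finner_mul_diagonal_mul_le {Z : Matrix (Fin m) (Fin n) ℝ} (hZ : opNorm Z ≤ 1)
    {U : Matrix (Fin m) (Fin r) ℝ} {V : Matrix (Fin n) (Fin r) ℝ} (hU : Uᵀ * U = 1)
    (hV : Vᵀ * V = 1) {σ : Fin r → ℝ} (hσ : ∀ i, 0 ≤ σ i) :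
    finner Z (U * diagonal σ * Vᵀ) ≤ ∑ i, σ i := by
  have hle : ∀ j, (Z *ᵥ Vᵀ j) ⬝ᵥ Uᵀ j ≤ 1 := fun j =>
    calc (Z *ᵥ Vᵀ j) ⬝ᵥ Uᵀ j ≤ √((Z *ᵥ Vᵀ j) ⬝ᵥ (Z *ᵥ Vᵀ j)) * √(Uᵀ j ⬝ᵥ Uᵀ j) :=
          dotProduct_le_sqrt_mul_sqrt _ _
      _ ≤ √(Vᵀ j ⬝ᵥ Vᵀ j) * √(Uᵀ j ⬝ᵥ Uᵀ j) := by
          gcongr; exact (opNorm_le_one_iff Z).mp hZ _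
      _ = 1 := by
          rw [dotProduct_self_transpose_apply_eq_one hU, dotProduct_self_transpose_apply_eq_one hV,
            Real.sqrt_one, one_mul]
  calc finner Z (U * diagonal σ * Vᵀ) = trace (diagonal σ * ((Z * V)ᵀ * U)) := by
        simp only [finner, transpose_mul, Matrix.mul_assoc]
        rw [trace_mul_comm Zᵀ]
        simp only [Matrix.mul_assoc]
        rw [trace_mul_comm U]
        simp only [Matrix.mul_assoc]
    _ = ∑ j, σ j * ((Z *ᵥ Vᵀ j) ⬝ᵥ Uᵀ j) := by
        simp only [trace, diag_apply, diagonal_mul]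
        rfl
    _ ≤ ∑ j, σ j := Finset.sum_le_sum fun j _ => mul_le_of_le_one_right (hσ j) (hle j)

theorem nuclearNorm_mul_diagonal_mul_le {U : Matrix (Fin m) (Fin r) ℝ}
    {V : Matrix (Fin n) (Fin r) ℝ} (hU : Uᵀ * U = 1) (hV : Vᵀ * V = 1) {σ : Fin r → ℝ}
    (hσ : ∀ i, 0 ≤ σ i) : nuclearNorm (U * diagonal σ * Vᵀ) ≤ ∑ i, σ i := by
  obtain ⟨Z, hZ, hZM⟩ := exists_opNorm_le_one_finner_eq_nuclearNorm (U * diagonal σ * Vᵀ)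
  exact hZM ▸ finner_mul_diagonal_mul_le hZ hU hV hσ

theorem opNorm_mul_transpose_add_le_one {U : Matrix (Fin m) (Fin r) ℝ}
    {V : Matrix (Fin n) (Fin r) ℝ} {W : Matrix (Fin m) (Fin n) ℝ} (hU : Uᵀ * U = 1)
    (hV : Vᵀ * V = 1) (hUW : Uᵀ * W = 0) (hWV : W * V = 0) (hW : opNorm W ≤ 1) :
    opNorm (U * Vᵀ + W) ≤ 1 := by
  rw [opNorm_le_one_iff] at hW ⊢
  intro x
  -- `U Vᵀ` sees only the component `V a` of `x`, and `W` only the orthogonal remainder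
  set a := Vᵀ *ᵥ x
  have hWx : W *ᵥ x = W *ᵥ (x - V *ᵥ a) := by
    rw [mulVec_sub, mulVec_mulVec, hWV, zero_mulVec, sub_zero]
  have hperp : (x - V *ᵥ a) ⬝ᵥ (x - V *ᵥ a) = x ⬝ᵥ x - a ⬝ᵥ a := by
    rw [sub_dotProduct, dotProduct_sub, dotProduct_sub, mulVec_dotProduct_mulVec V V, hV,
      one_mulVec, dotProduct_comm (V *ᵥ a) x, dotProduct_mulVec x V, ← mulVec_transpose]
    ring
  have hUWx : (U *ᵥ a) ⬝ᵥ (W *ᵥ x) = 0 := by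
    rw [mulVec_dotProduct_mulVec, hUW, zero_mulVec, dotProduct_zero]
  calc ((U * Vᵀ + W) *ᵥ x) ⬝ᵥ ((U * Vᵀ + W) *ᵥ x) = a ⬝ᵥ a + (W *ᵥ x) ⬝ᵥ (W *ᵥ x) := by
        rw [add_mulVec, ← mulVec_mulVec, add_dotProduct, dotProduct_add, dotProduct_add,
          dotProduct_comm (W *ᵥ x), hUWx, mulVec_dotProduct_mulVec U U, hU, one_mulVec]
        ring
    _ ≤ a ⬝ᵥ a + (x - V *ᵥ a) ⬝ᵥ (x - V *ᵥ a) := by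
        rw [hWx]; gcongr; exact hW _
    _ = x ⬝ᵥ x := by rw [hperp]; ring

theorem finner_mul_transpose_add_mul_diagonal_mul {U : Matrix (Fin m) (Fin r) ℝ}
    {V : Matrix (Fin n) (Fin r) ℝ} {W : Matrix (Fin m) (Fin n) ℝ} (hU : Uᵀ * U = 1)
    (hV : Vᵀ * V = 1) (hUW : Uᵀ * W = 0) (σ : Fin r → ℝ) :
    finner (U * Vᵀ + W) (U * diagonal σ * Vᵀ) = ∑ i, σ i := by
  calc finner (U * Vᵀ + W) (U * diagonal σ * Vᵀ)
      = trace (V * (Uᵀ * U) * diagonal σ * Vᵀ + (Uᵀ * W)ᵀ * diagonal σ * Vᵀ) := by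
        simp only [finner, transpose_add, transpose_mul, transpose_transpose, Matrix.add_mul,
          Matrix.mul_assoc]
    _ = trace (diagonal σ * (Vᵀ * V)) := by
        rw [hU, hUW, transpose_zero, Matrix.zero_mul, Matrix.zero_mul, add_zero, Matrix.mul_one,
          Matrix.mul_assoc, trace_mul_comm, Matrix.mul_assoc]
    _ = ∑ i, σ i := by rw [hV, Matrix.mul_one, trace_diagonal]

end FinMatrix

/-- If M = UΣVᵀ (reduced SVD, Σ positive diagonal), UᵀW = 0, WV = 0 and
‖W‖₂ ≤ 1, then UVᵀ + W is a subgradient of the nuclear norm at M. -/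
theorem nuclearNorm_subgradient {m n r : ℕ}
    (M : Matrix (Fin m) (Fin n) ℝ)
    (U : Matrix (Fin m) (Fin r) ℝ) (V : Matrix (Fin n) (Fin r) ℝ) (σ : Fin r → ℝ)
    (hU : Uᵀ * U = 1) (hV : Vᵀ * V = 1) (hσ : ∀ i, 0 < σ i)
    (hM : M = U * Matrix.diagonal σ * Vᵀ)
    (W : Matrix (Fin m) (Fin n) ℝ)
    (hUW : Uᵀ * W = 0) (hWV : W * V = 0) (hWnorm : opNorm W ≤ 1) :
    ∀ N : Matrix (Fin m) (Fin n) ℝ,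
      nuclearNorm N ≥ nuclearNorm M + finner (U * Vᵀ + W) (N - M) := by
  intro N
  have hG : opNorm (U * Vᵀ + W) ≤ 1 := opNorm_mul_transpose_add_le_one hU hV hUW hWV hWnorm
  have hGN : finner (U * Vᵀ + W) N ≤ nuclearNorm N := finner_le_nuclearNorm hG N
  have hGM : finner (U * Vᵀ + W) M = ∑ i, σ i := by
    rw [hM, finner_mul_transpose_add_mul_diagonal_mul hU hV hUW]
  have hM_le : nuclearNorm M ≤ ∑ i, σ i :=
    hM ▸ nuclearNorm_mul_diagonal_mul_le hU hV fun i => (hσ i).le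
  rw [ge_iff_le, finner_sub_right, hGM]
  linarith
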